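/- arXiv:quant-ph/0010034 — 2 statements merged into one kernel-verified Lean document; each statement's English description precedes it below -/
import Mathlib

section
/- Let f : ℕ → ℕ be periodic with exact period P dividing Q, injective on {0,...,P-1}, and ω = exp(2πi/Q). Then if Q divides Py, the squared norm ‖Σ_{x=0}^{Q-1} ω^{xy} |f(x)⟩‖² equals P·(Q/P)² = Q²/P, where |f(0)⟩,...,|f(P-1)⟩ are orthonormal vectors. -/
open Finset

lemma aux_sum_mod {M : Type*} [AddCommMonoid M] (g : ℕ → M) (P : ℕ) (m : ℕ) :
    ∑ x ∈ range (m * P), g (x % P) = m • ∑ r ∈ range P, g r := by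
  induction m with
  | zero => simp
  | succ m ih =>
    rw [Nat.succ_mul, Finset.sum_range_add, ih, succ_nsmul]
    congr 1
    refine Finset.sum_congr rfl fun i hi => ?_
    have : (m * P + i) % P = i := by
      rw [Nat.add_mod, Nat.mul_mod_left, zero_add, Nat.mod_mod_of_dvd,
        Nat.mod_eq_of_lt (Finset.mem_range.mp hi)]
      exact dvd_refl P
    rw [this]

theorem stmt_8 (P Q y : ℕ) (hP : 0 < P) (hy : 0 < y) (hPQ : P ∣ Q) (hQPy : Q ∣ P * y)
    (V : Type*) [NormedAddCommGroup V] [InnerProductSpace ℂ V]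
    (e : ℕ → V) (he : Orthonormal ℂ (fun i : Fin P => e i)) :
    ‖∑ x ∈ range Q, (Complex.exp (2 * Real.pi * Complex.I / Q)) ^ (x * y) • e (x % P)‖ ^ 2
      = (Q : ℝ) ^ 2 / P := by
  have hQ : 0 < Q := Nat.pos_of_dvd_of_pos hQPy (Nat.mul_pos hP hy)
  set ω : ℂ := Complex.exp (2 * Real.pi * Complex.I / Q) with hω
  have hωQ : ω ^ Q = 1 := by
    rw [hω, ← Complex.exp_nat_mul]
    rw [mul_div_cancel₀ _ (by exact_mod_cast hQ.ne')]
    exact Complex.exp_two_pi_mul_I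
  have hωPy : ω ^ (P * y) = 1 := by
    obtain ⟨k, hk⟩ := hQPy
    rw [hk, pow_mul, hωQ, one_pow]
  -- the phase depends only on x % P
  have key : ∀ x : ℕ, ω ^ (x * y) = ω ^ ((x % P) * y) := by
    intro x
    conv_lhs => rw [← Nat.div_add_mod x P]
    rw [add_mul, pow_add, show P * (x / P) * y = (P * y) * (x / P) by ring, pow_mul, hωPy,
      one_pow, one_mul]
  have hsum : ∑ x ∈ range Q, ω ^ (x * y) • e (x % P)
      = (Q / P) • ∑ r ∈ range P, ω ^ (r * y) • e r := by
    calc ∑ x ∈ range Q, ω ^ (x * y) • e (x % P)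
        = ∑ x ∈ range ((Q / P) * P), (fun r => ω ^ (r * y) • e r) (x % P) := by
          rw [Nat.div_mul_cancel hPQ]
          exact Finset.sum_congr rfl fun x _ => by simp only [key x]
      _ = (Q / P) • ∑ r ∈ range P, ω ^ (r * y) • e r :=
          aux_sum_mod (fun r => ω ^ (r * y) • e r) P (Q / P)
  rw [hsum]
  have habs : ‖ω‖ = 1 := by
    rw [hω]
    have : (2 * Real.pi * Complex.I / Q : ℂ) = Complex.I * ((2 * Real.pi / Q : ℝ) : ℂ) := by
      push_cast; ring
    rw [this, Complex.norm_exp]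
    simp [Complex.mul_re]
  have hone : ∀ i : Fin P, (starRingEnd ℂ) (ω ^ ((i : ℕ) * y)) * ω ^ ((i : ℕ) * y) = 1 := by
    intro i
    rw [mul_comm, Complex.mul_conj, map_pow, Complex.normSq_eq_norm_sq, habs]
    norm_num
  have hSnorm : ‖∑ r ∈ range P, ω ^ (r * y) • e r‖ ^ 2 = (P : ℝ) := by
    have hre : ∑ r ∈ range P, ω ^ (r * y) • e r
        = ∑ i ∈ (Finset.univ : Finset (Fin P)), ω ^ ((i : ℕ) * y) • e (i : ℕ) := by
      rw [← Fin.sum_univ_eq_sum_range]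
    rw [hre]
    have h1 := he.inner_sum (fun i : Fin P => ω ^ ((i : ℕ) * y))
      (fun i : Fin P => ω ^ ((i : ℕ) * y)) Finset.univ
    have h2 : (∑ i ∈ (Finset.univ : Finset (Fin P)),
        (starRingEnd ℂ) (ω ^ ((i : ℕ) * y)) * ω ^ ((i : ℕ) * y)) = (P : ℂ) := by
      rw [Finset.sum_congr rfl fun i _ => hone i]
      simp
    have hnorm := inner_self_eq_norm_sq (𝕜 := ℂ)
      (∑ i ∈ (Finset.univ : Finset (Fin P)), ω ^ ((i : ℕ) * y) • e (i : ℕ))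
    rw [← hnorm, h1, h2]
    simp
  rw [RCLike.norm_nsmul ℝ, nsmul_eq_mul, mul_pow, hSnorm]
  have hcast : ((Q / P : ℕ) : ℝ) = (Q : ℝ) / P := by
    rw [Nat.cast_div hPQ (by exact_mod_cast hP.ne')]
  rw [hcast]
  have hPne : (P : ℝ) ≠ 0 := by exact_mod_cast hP.ne'
  field_simp
end

section
/- Suppose P ≤ N, N² ≤ Q, 0 ≤ y < Q, and |Py - Q·d| ≤ P/2 for some integer d. Then |y/Q - d/P| ≤ 1/(2P²), and hence d/P is a convergent of the continued fraction expansion of y/Q. -/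
theorem stmt_13 (P N Q y d : ℤ) (hP : 0 < P) (hPN : P ≤ N) (hQ : N ^ 2 ≤ Q)
    (hy0 : 0 ≤ y) (hy : y < Q) (h : 2 * |P * y - Q * d| ≤ P) :
    |(y : ℝ) / Q - (d : ℝ) / P| ≤ 1 / (2 * (P : ℝ) ^ 2) ∧
    ∃ n : ℕ, (GenContFract.of ((y : ℝ) / Q)).convs n = (d : ℝ) / P := by
  have hN : 0 < N := lt_of_lt_of_le hP hPN
  have hP2Q : P ^ 2 ≤ Q := le_trans (by nlinarith) hQ
  have hQ0 : (0:ℤ) < Q := lt_of_lt_of_le (by positivity) hP2Q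
  -- strict integer inequality
  have key : 2 * P * |P * y - Q * d| < Q := by
    rcases lt_or_eq_of_le hP2Q with hlt | heq
    · calc 2 * P * |P * y - Q * d| = P * (2 * |P * y - Q * d|) := by ring
        _ ≤ P * P := by
            exact mul_le_mul_of_nonneg_left h hP.le
        _ < Q := by nlinarith
    · have hQP : Q = P ^ 2 := heq.symm
      have hfac : P * y - Q * d = P * (y - P * d) := by rw [hQP]; ring
      have habs : |P * y - Q * d| = P * |y - P * d| := by
        rw [hfac, abs_mul, abs_of_pos hP]
      rw [habs] at h
      have h1 : 2 * |y - P * d| ≤ 1 := by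
        have := (mul_le_mul_iff_right₀ hP).mp (by linarith [h] : P * (2 * |y - P * d|) ≤ P * 1)
        linarith
      have h2 : |y - P * d| = 0 := by
        have := abs_nonneg (y - P * d); omega
      rw [habs, h2]
      simpa using hQ0
  have hPR : (0:ℝ) < (P:ℝ) := by exact_mod_cast hP
  have hQR : (0:ℝ) < (Q:ℝ) := by exact_mod_cast hQ0
  -- the difference formula
  have hdiff : |(y : ℝ) / Q - (d : ℝ) / P| = |((P * y - Q * d : ℤ) : ℝ)| / (P * Q) := by
    have heq : (y:ℝ)/Q - (d:ℝ)/P = ((P * y - Q * d : ℤ) : ℝ)/((P:ℝ)*Q) := by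
      field_simp
      push_cast
      ring
    rw [heq, abs_div, abs_of_pos (mul_pos hPR hQR)]
  have hstrict : |(y : ℝ) / Q - (d : ℝ) / P| < 1 / (2 * (P : ℝ) ^ 2) := by
    rw [hdiff, div_lt_div_iff₀ (by positivity) (by positivity)]
    have : ((2 * P * |P * y - Q * d| : ℤ) : ℝ) < ((Q:ℤ):ℝ) := by exact_mod_cast key
    push_cast [Int.cast_abs] at this ⊢
    nlinarith
  refine ⟨hstrict.le, ?_⟩
  set q : ℚ := (d : ℚ) / (P : ℚ) with hq
  have hqR : ((q : ℝ)) = (d : ℝ) / P := by push_cast [hq]; ring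
  have hden : (q.den : ℤ) ∣ P := by
    have := Rat.den_dvd d P
    rwa [Rat.divInt_eq_div] at this
  have hdenle : (q.den : ℤ) ≤ P := Int.le_of_dvd hP hden
  have hdenR : (q.den : ℝ) ≤ (P : ℝ) := by exact_mod_cast hdenle
  have hden0 : (0:ℝ) < (q.den : ℝ) := by exact_mod_cast q.pos
  have hbound : |(y : ℝ) / Q - (q : ℝ)| < 1 / (2 * (q.den : ℝ) ^ 2) := by
    rw [hqR]
    refine lt_of_lt_of_le hstrict ?_
    apply one_div_le_one_div_of_le (by positivity)
    nlinarith
  obtain ⟨n, hn⟩ := Real.exists_convs_eq_rat hbound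
  exact ⟨n, by rw [hn, hqR]⟩
end
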